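/- Suppose v : \mathbb{R} \to \mathbb{R} is a C^2 increasing solution of \varepsilon (v'/\sqrt{1+(v')^2})' - c v' + f(v) = 0 with \varepsilon > 0, connecting 0 and 1, i.e. v(z) \to 0 as z \to -\infty, v(z) \to 1 as z \to +\infty, v'(z) \to 0 as z \to \pm\infty, and v' \in L^2(\mathbb{R}) with 0 < \int_{\mathbb{R}} (v')^2 < \infty. If f : [0,1] \to \mathbb{R} is continuous with \int_0^1 f(s) ds > 0, then c > 0. -/

import Mathlib

open Set Filter MeasureTheory intervalIntegral

/-!
Multiplying the equation by `v'` turns every term into an exact derivative: with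
`F' = f` on `[0, 1]`, the energy `F (v z) - ε / √(1 + v'(z)²)` has derivative `c v'(z)²`.
Integrating over `ℝ` and using `v' → 0`, `v → 0, 1` at `∓∞` gives
`c ∫ (v')² = F 1 - F 0 = ∫₀¹ f > 0`, so `c > 0`.
-/

lemma hasDerivAt_sqrt_one_add_sq {w : ℝ → ℝ} {w' z : ℝ} (hw : HasDerivAt w w' z) :
    HasDerivAt (fun t => √(1 + w t ^ 2)) (w z * w' / √(1 + w z ^ 2)) z := by
  refine (((hw.fun_pow 2).const_add 1).sqrt (by positivity)).congr_deriv ?_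
  field_simp
  ring

lemma hasDerivAt_div_sqrt_one_add_sq {w : ℝ → ℝ} {w' z : ℝ} (hw : HasDerivAt w w' z) :
    HasDerivAt (fun t => w t / √(1 + w t ^ 2)) (w' / √(1 + w z ^ 2) ^ 3) z := by
  have hsq : √(1 + w z ^ 2) ^ 2 = 1 + w z ^ 2 := Real.sq_sqrt (by positivity)
  have hs : 0 < √(1 + w z ^ 2) := by positivity
  refine (hw.div (hasDerivAt_sqrt_one_add_sq hw) hs.ne').congr_deriv ?_
  generalize √(1 + w z ^ 2) = s at hs hsq ⊢
  field_simp
  linear_combination w' * hsq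

lemma hasDerivAt_inv_sqrt_one_add_sq {w : ℝ → ℝ} {w' z : ℝ} (hw : HasDerivAt w w' z) :
    HasDerivAt (fun t => (√(1 + w t ^ 2))⁻¹) (-(w z * w') / √(1 + w z ^ 2) ^ 3) z := by
  have hs : 0 < √(1 + w z ^ 2) := by positivity
  refine ((hasDerivAt_sqrt_one_add_sq hw).inv hs.ne').congr_deriv ?_
  generalize √(1 + w z ^ 2) = s at hs ⊢
  field_simp

lemma tendsto_const_div_sqrt_one_add_sq {α : Type*} {l : Filter α} {w : α → ℝ}
    (hw : Tendsto w l (nhds 0)) (a : ℝ) :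
    Tendsto (fun t => a / √(1 + w t ^ 2)) l (nhds a) := by
  have h : Tendsto (fun t => √(1 + w t ^ 2)) l (nhds 1) := by
    simpa using ((hw.pow 2).const_add 1).sqrt
  simpa [div_eq_mul_inv] using (h.inv₀ one_ne_zero).const_mul a

/-- Take the primitive of the extension of `f` that is constant outside `[a, b]`. -/
lemma ContinuousOn.exists_hasDerivAt_Icc {f : ℝ → ℝ} {a b : ℝ} (hab : a ≤ b)
    (hf : ContinuousOn f (Icc a b)) :
    ∃ F : ℝ → ℝ, Continuous F ∧ (∀ u ∈ Icc a b, HasDerivAt F (f u) u) ∧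
      F b - F a = ∫ s in a..b, f s := by
  set g : ℝ → ℝ := fun u => f (projIcc a b hab u)
  have hg : Continuous g :=
    hf.comp_continuous (continuous_subtype_val.comp continuous_projIcc) fun u =>
      (projIcc a b hab u).2
  have hgf : EqOn g f (Icc a b) := fun u hu => by simp [g, projIcc_of_mem hab hu]
  refine ⟨fun u => ∫ s in a..u, g s, ?_, fun u hu => ?_, ?_⟩
  · exact continuous_primitive (fun _ _ => hg.intervalIntegrable _ _) a
  · exact hgf hu ▸ (hg.integral_hasStrictDerivAt a u).hasDerivAt
  · simp only [integral_same, sub_zero]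
    exact integral_congr (by rwa [uIcc_of_le hab])

lemma hasDerivAt_energy {f F v : ℝ → ℝ} {ε c : ℝ} (hv : ContDiff ℝ 2 v)
    (hF : ∀ z, HasDerivAt F (f (v z)) (v z))
    (hode : ∀ z : ℝ,
      ε * deriv (fun t => deriv v t / Real.sqrt (1 + (deriv v t) ^ 2)) z
        - c * deriv v z + f (v z) = 0) (z : ℝ) :
    HasDerivAt (fun t => F (v t) - ε / √(1 + deriv v t ^ 2)) (c * deriv v z ^ 2) z := by
  have hv' : ContDiff ℝ 1 (deriv v) := hv.iterate_deriv' 1 1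
  have hw : HasDerivAt (deriv v) (deriv (deriv v) z) z :=
    (hv'.differentiable one_ne_zero z).hasDerivAt
  have hode_z := hode z
  rw [(hasDerivAt_div_sqrt_one_add_sq hw).deriv] at hode_z
  have hE := ((hF z).comp z ((hv.differentiable two_ne_zero) z).hasDerivAt).sub
    ((hasDerivAt_inv_sqrt_one_add_sq hw).const_mul ε)
  simp only [div_eq_mul_inv] at hE hode_z ⊢
  refine hE.congr_deriv ?_
  linear_combination deriv v z * hode_z

theorem stmt_5_general
    (f : ℝ → ℝ) (v : ℝ → ℝ) (ε c : ℝ)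
    (hC2 : ContDiff ℝ 2 v)
    (hrange : ∀ z, v z ∈ Icc (0 : ℝ) 1)
    (hode : ∀ z : ℝ,
      ε * deriv (fun t => deriv v t / Real.sqrt (1 + (deriv v t) ^ 2)) z
        - c * deriv v z + f (v z) = 0)
    (hlim0 : Tendsto v atBot (nhds 0))
    (hlim1 : Tendsto v atTop (nhds 1))
    (hd0 : Tendsto (deriv v) atBot (nhds 0))
    (hd1 : Tendsto (deriv v) atTop (nhds 0))
    (hL2 : Integrable (fun z => (deriv v z) ^ 2))
    (hL2pos : 0 < ∫ z : ℝ, (deriv v z) ^ 2)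
    (hf : ContinuousOn f (Icc 0 1))
    (hfint : 0 < ∫ s in (0:ℝ)..1, f s) :
    0 < c := by
  obtain ⟨F, hFcont, hF, hF01⟩ := hf.exists_hasDerivAt_Icc zero_le_one
  have henergy := hasDerivAt_energy hC2 (fun z => hF (v z) (hrange z)) hode
  have hbot := ((hFcont.tendsto 0).comp hlim0).sub (tendsto_const_div_sqrt_one_add_sq hd0 ε)
  have htop := ((hFcont.tendsto 1).comp hlim1).sub (tendsto_const_div_sqrt_one_add_sq hd1 ε)
  have hint := integral_of_hasDerivAt_of_tendsto henergy (hL2.const_mul c) hbot htop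
  rw [MeasureTheory.integral_const_mul, sub_sub_sub_cancel_right, hF01] at hint
  exact pos_of_mul_pos_left (hint ▸ hfint) hL2pos.le

/-- An increasing C² heteroclinic front between 0 and 1 for the saturating-diffusion
traveling wave equation, with nontrivial L² derivative, must have positive speed
when `∫₀¹ f > 0`. -/
theorem stmt_5
    (f : ℝ → ℝ) (v : ℝ → ℝ) (ε c : ℝ)
    (hε : 0 < ε)
    (hC2 : ContDiff ℝ 2 v)
    (hmono : Monotone v)
    (hrange : ∀ z, v z ∈ Icc (0 : ℝ) 1)
    (hode : ∀ z : ℝ,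
      ε * deriv (fun t => deriv v t / Real.sqrt (1 + (deriv v t) ^ 2)) z
        - c * deriv v z + f (v z) = 0)
    (hlim0 : Tendsto v atBot (nhds 0))
    (hlim1 : Tendsto v atTop (nhds 1))
    (hd0 : Tendsto (deriv v) atBot (nhds 0))
    (hd1 : Tendsto (deriv v) atTop (nhds 0))
    (hL2 : Integrable (fun z => (deriv v z) ^ 2))
    (hL2pos : 0 < ∫ z : ℝ, (deriv v z) ^ 2)
    (hf : ContinuousOn f (Icc 0 1))
    (hfint : 0 < ∫ s in (0:ℝ)..1, f s) :
    0 < c :=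
  stmt_5_general f v ε c hC2 hrange hode hlim0 hlim1 hd0 hd1 hL2 hL2pos hf hfint
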